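/- Let α > −1 and β > −1 be real numbers and n ≥ 2 an integer. Then Σ_{j=2}^{n} [(α+β+3)_{j−1} / (j−1)!] [(α+β+3)_{j−2} / (j−2)!] (2j+α+β) = (α+β+3) [(α+β+4)_{n−1} / (n−1)!] [(α+β+4)_{n−2} / (n−2)!]. -/

import Mathlib

/-! With `a = α + β + 3` and `j = m + 2`, the sum telescopes: adding the term of index `m + 1`
to `a (a+1)_{m+1}/(m+1)! · (a+1)_m/m!` multiplies it by `(a+m+1)(a+m+2) / ((m+1)(m+2))`,
because `(m+1)(m+2) + a(2m+a+3) = (a+m+1)(a+m+2)`. -/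

/-- The Pochhammer symbol (rising factorial) `(a)_k = a (a+1) ⋯ (a+k-1)`. -/
noncomputable def poch (a : ℝ) (k : ℕ) : ℝ := (ascPochhammer ℝ k).eval a

open Finset Nat

lemma poch_succ (a : ℝ) (k : ℕ) : poch a (k + 1) = poch a k * (a + k) :=
  ascPochhammer_succ_eval k a

lemma poch_succ_left (a : ℝ) (k : ℕ) : poch a (k + 1) = a * poch (a + 1) k := by
  simp [poch, ascPochhammer_succ_left, Polynomial.eval_comp, add_comm]

theorem sum_range_poch_mul_poch (a : ℝ) (N : ℕ) :
    ∑ m ∈ range (N + 1), poch a (m + 1) / (m + 1)! * (poch a m / m !) * (2 * m + a + 1)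
      = a * (poch (a + 1) (N + 1) / (N + 1)!) * (poch (a + 1) N / N !) := by
  induction N with
  | zero => simp [poch]
  | succ N ih =>
    rw [sum_range_succ, ih, poch_succ_left a (N + 1), poch_succ_left a N,
      poch_succ (a + 1) (N + 1), poch_succ (a + 1) N, factorial_succ (N + 1), factorial_succ N]
    field_simp
    push_cast
    ring

theorem c0_eigenvalue_sum_general (α β : ℝ) (n : ℕ) (hn : 2 ≤ n) :
    ∑ j ∈ Finset.Icc 2 n,
      poch (α + β + 3) (j - 1) / Nat.factorial (j - 1) *
        (poch (α + β + 3) (j - 2) / Nat.factorial (j - 2)) * (2 * j + α + β)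
    = (α + β + 3) * (poch (α + β + 4) (n - 1) / Nat.factorial (n - 1)) *
        (poch (α + β + 4) (n - 2) / Nat.factorial (n - 2)) := by
  obtain ⟨N, rfl⟩ : ∃ N, n = N + 2 := ⟨n - 2, by omega⟩
  rw [← Ico_add_one_right_eq_Icc, sum_Ico_eq_sum_range, show N + 2 + 1 - 2 = N + 1 by omega]
  simp only [show N + 2 - 1 = N + 1 by omega, Nat.add_sub_cancel,
    show ∀ m, 2 + m - 1 = m + 1 by omega, show ∀ m, 2 + m - 2 = m by omega]
  rw [show α + β + 4 = α + β + 3 + 1 by ring]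
  convert sum_range_poch_mul_poch (α + β + 3) N using 3
  push_cast
  ring

/-- `Σ_{j=2}^{n} [(α+β+3)_{j−1}/(j−1)!] [(α+β+3)_{j−2}/(j−2)!] (2j+α+β)
 = (α+β+3) [(α+β+4)_{n−1}/(n−1)!] [(α+β+4)_{n−2}/(n−2)!]`. -/
theorem c0_eigenvalue_sum (α β : ℝ) (hα : -1 < α) (hβ : -1 < β) (n : ℕ) (hn : 2 ≤ n) :
    ∑ j ∈ Finset.Icc 2 n,
      poch (α + β + 3) (j - 1) / Nat.factorial (j - 1) *
        (poch (α + β + 3) (j - 2) / Nat.factorial (j - 2)) * (2 * j + α + β)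
    = (α + β + 3) * (poch (α + β + 4) (n - 1) / Nat.factorial (n - 1)) *
        (poch (α + β + 4) (n - 2) / Nat.factorial (n - 2)) :=
  c0_eigenvalue_sum_general α β n hn
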